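/- For every isostatic graph G (with at least one edge), there exists a canonical DR-plan of G. -/
import Mathlib


/-- A finite combinatorial graph: a finite vertex set and a finite set of edges,
each edge an unordered pair of distinct vertices whose endpoints lie in the vertex set. -/
structure CGraph (α : Type) [DecidableEq α] where
  verts : Finset α
  edges : Finset (Sym2 α)
  not_diag : ∀ e ∈ edges, ¬ e.IsDiag
  endpoints_mem : ∀ e ∈ edges, ∀ v ∈ e, v ∈ verts

namespace CGraph

variable {α : Type} [DecidableEq α]

/-- Subgraph relation (componentwise containment). -/
def IsSubgraph (H G : CGraph α) : Prop :=
  H.verts ⊆ G.verts ∧ H.edges ⊆ G.edges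

/-- Componentwise union of two graphs. -/
def union (G H : CGraph α) : CGraph α where
  verts := G.verts ∪ H.verts
  edges := G.edges ∪ H.edges
  not_diag := by
    intro e he
    rcases Finset.mem_union.1 he with h | h
    · exact G.not_diag e h
    · exact H.not_diag e h
  endpoints_mem := by
    intro e he v hv
    rcases Finset.mem_union.1 he with h | h
    · exact Finset.mem_union_left _ (G.endpoints_mem e h v hv)
    · exact Finset.mem_union_right _ (H.endpoints_mem e h v hv)

/-- Componentwise intersection of two graphs. -/
def inter (G H : CGraph α) : CGraph α where
  verts := G.verts ∩ H.verts
  edges := G.edges ∩ H.edges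
  not_diag := fun e he => G.not_diag e (Finset.mem_inter.1 he).1
  endpoints_mem := fun e he v hv => Finset.mem_inter.2
    ⟨G.endpoints_mem e (Finset.mem_inter.1 he).1 v hv,
     H.endpoints_mem e (Finset.mem_inter.1 he).2 v hv⟩

/-- The empty graph. -/
def empty : CGraph α := ⟨∅, ∅, by simp, by simp⟩

/-- Union of a list of graphs. -/
def listUnion : List (CGraph α) → CGraph α
  | [] => empty
  | g :: gs => g.union (listUnion gs)

/-- A graph is trivial if it has at most one vertex. -/
def Trivial (G : CGraph α) : Prop := G.verts.card ≤ 1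

/-- (2,3)-sparsity: every subgraph on at least 2 vertices has at most `2|V'| - 3` edges
(stated additively to avoid truncated subtraction). -/
def Sparse23 (G : CGraph α) : Prop :=
  ∀ H : CGraph α, H.IsSubgraph G → 2 ≤ H.verts.card →
    H.edges.card + 3 ≤ 2 * H.verts.card

/-- Isostatic (Laman-tight): (2,3)-sparse with `|E| = 2|V| - 3`. -/
def Isostatic (G : CGraph α) : Prop :=
  G.Sparse23 ∧ G.edges.card + 3 = 2 * G.verts.card

/-- Underconstrained: (2,3)-sparse, at least two vertices, and `|E| < 2|V| - 3`. -/
def Underconstrained (G : CGraph α) : Prop :=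
  G.Sparse23 ∧ 2 ≤ G.verts.card ∧ G.edges.card + 3 < 2 * G.verts.card

/-- A graph consisting of a single edge together with its two endpoints. -/
def IsSingleEdge (G : CGraph α) : Prop :=
  ∃ u v : α, u ≠ v ∧ G.verts = {u, v} ∧ G.edges = {s(u, v)}

/-- A cluster of `C`: a proper isostatic subgraph of `C` that is vertex-maximal among
proper isostatic subgraphs of `C`. -/
def IsCluster (D C : CGraph α) : Prop :=
  D.IsSubgraph C ∧ D ≠ C ∧ D.Isostatic ∧
  ∀ D' : CGraph α, D'.IsSubgraph C → D' ≠ C → D'.Isostatic → ¬ D.verts ⊂ D'.verts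

/-- Every pair of distinct clusters of `C` has trivial intersection. -/
def PairwiseTrivialClusters (C : CGraph α) : Prop :=
  ∀ D₁ D₂ : CGraph α, IsCluster D₁ C → IsCluster D₂ C → D₁ ≠ D₂ → (D₁.inter D₂).Trivial

end CGraph

/-- A finite rooted tree whose nodes are labeled by graphs. -/
inductive DRTree (α : Type) [DecidableEq α] : Type
  | node : CGraph α → List (DRTree α) → DRTree α

namespace DRTree

variable {α : Type} [DecidableEq α]

/-- The label at the root of the tree. -/
def label : DRTree α → CGraph α
  | .node C _ => C

/-- The size of a DR-plan: the maximum fan-in (number of children) over all nodes. -/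
def size : DRTree α → ℕ
  | .node _ ts => ts.attach.foldr (fun t acc => max (size t.1) acc) ts.length
decreasing_by
  have := List.sizeOf_lt_of_mem t.2
  simp only [DRTree.node.sizeOf_spec]
  omega

end DRTree

/-- `IsDRPlan t` : the labeled tree `t` is a DR-plan (of its root label): every node is
labeled by an isostatic graph, every leaf is a single edge, and every internal node
labeled `C` has `N ≥ 2` children, all proper isostatic subgraphs of `C`, whose union
is `C`. -/
inductive IsDRPlan {α : Type} [DecidableEq α] : DRTree α → Prop
  | leaf (C : CGraph α) : C.Isostatic → C.IsSingleEdge → IsDRPlan (.node C [])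
  | node (C : CGraph α) (ts : List (DRTree α)) :
      C.Isostatic →
      2 ≤ ts.length →
      (∀ t ∈ ts, (DRTree.label t).IsSubgraph C ∧ DRTree.label t ≠ C ∧
        (DRTree.label t).Isostatic) →
      CGraph.listUnion (ts.map DRTree.label) = C →
      (∀ t ∈ ts, IsDRPlan t) →
      IsDRPlan (.node C ts)

/-- `t` is a DR-plan of the graph `G`: a DR-plan whose root is labeled `G`. -/
def IsDRPlanOf {α : Type} [DecidableEq α] (t : DRTree α) (G : CGraph α) : Prop :=
  IsDRPlan t ∧ t.label = G

/-- A DR-plan is canonical if at every internal node labeled `C`: all children are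
clusters of `C`; if every pair of distinct clusters of `C` intersects trivially then
the children are exactly all the clusters of `C`; and otherwise there are exactly two
children, which are two clusters of `C` with nontrivial intersection. -/
inductive IsCanonical {α : Type} [DecidableEq α] : DRTree α → Prop
  | leaf (C : CGraph α) : IsCanonical (.node C [])
  | node (C : CGraph α) (ts : List (DRTree α)) :
      ts ≠ [] →
      (∀ t ∈ ts, CGraph.IsCluster (DRTree.label t) C) →
      (C.PairwiseTrivialClusters →
        ∀ D : CGraph α, CGraph.IsCluster D C ↔ ∃ t ∈ ts, DRTree.label t = D) →
      (¬ C.PairwiseTrivialClusters →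
        ∃ t₁ t₂ : DRTree α, ts = [t₁, t₂] ∧ DRTree.label t₁ ≠ DRTree.label t₂ ∧
          ¬ ((DRTree.label t₁).inter (DRTree.label t₂)).Trivial) →
      (∀ t ∈ ts, IsCanonical t) →
      IsCanonical (.node C ts)

namespace CGraph

variable {α : Type} [DecidableEq α]

lemma ext' {G H : CGraph α} (h1 : G.verts = H.verts) (h2 : G.edges = H.edges) : G = H := by
  cases G; cases H; simp only at h1 h2; subst h1; subst h2; rfl

@[simp] lemma union_verts (G H : CGraph α) : (G.union H).verts = G.verts ∪ H.verts := rfl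
@[simp] lemma union_edges (G H : CGraph α) : (G.union H).edges = G.edges ∪ H.edges := rfl
@[simp] lemma inter_verts (G H : CGraph α) : (G.inter H).verts = G.verts ∩ H.verts := rfl
@[simp] lemma inter_edges (G H : CGraph α) : (G.inter H).edges = G.edges ∩ H.edges := rfl
@[simp] lemma empty_verts : (empty : CGraph α).verts = ∅ := rfl
@[simp] lemma empty_edges : (empty : CGraph α).edges = ∅ := rfl

lemma union_empty (G : CGraph α) : G.union empty = G :=
  ext' (Finset.union_empty _) (Finset.union_empty _)

lemma Sparse23.subgraph {G H : CGraph α} (hG : G.Sparse23) (h : H.IsSubgraph G) : H.Sparse23 :=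
  fun K hK h2 => hG K ⟨hK.1.trans h.1, hK.2.trans h.2⟩ h2

lemma Isostatic.two_le_verts {G : CGraph α} (h : G.Isostatic) : 2 ≤ G.verts.card := by
  have := h.2; omega

lemma Isostatic.one_le_edges {G : CGraph α} (h : G.Isostatic) : 1 ≤ G.edges.card := by
  have h1 := h.2; have h2 := h.two_le_verts; omega

end CGraph
namespace CGraph

variable {α : Type} [DecidableEq α]

lemma verts_ssubset {D C : CGraph α} (h : D.IsSubgraph C) (hne : D ≠ C)
    (hD : D.Isostatic) (hC : C.Isostatic) : D.verts ⊂ C.verts := by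
  refine Finset.ssubset_iff_subset_ne.2 ⟨h.1, fun hv => ?_⟩
  have hcard : D.verts.card = C.verts.card := by rw [hv]
  have hE : C.edges.card ≤ D.edges.card := by have := hD.2; have := hC.2; omega
  exact hne (ext' hv (Finset.eq_of_subset_of_card_le h.2 hE))

lemma exists_edge_of_mem_verts {G : CGraph α} (hG : G.Isostatic) {v : α} (hv : v ∈ G.verts) :
    ∃ e ∈ G.edges, v ∈ e := by
  by_contra hcon
  push_neg at hcon
  have h2 : 2 ≤ G.verts.card := hG.two_le_verts
  rcases Nat.lt_or_ge G.verts.card 3 with h3 | h3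
  · -- two vertices, one edge
    have hc : G.verts.card = 2 := by omega
    have hE : G.edges.card = 1 := by have := hG.2; omega
    obtain ⟨e, he⟩ := Finset.card_eq_one.1 hE
    have heG : e ∈ G.edges := he ▸ Finset.mem_singleton_self e
    induction e using Sym2.ind with
    | _ u w =>
      have huw : u ≠ w := by
        intro h; exact G.not_diag _ heG (Sym2.mk_isDiag_iff.2 h)
      have hsub : ({u, w} : Finset α) ⊆ G.verts := by
        intro x hx
        rcases Finset.mem_insert.1 hx with rfl | hx
        · exact G.endpoints_mem _ heG _ (Sym2.mem_mk_left _ _)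
        · exact G.endpoints_mem _ heG _ ((Finset.mem_singleton.1 hx) ▸ Sym2.mem_mk_right _ _)
      have hveq : G.verts = {u, w} :=
        (Finset.eq_of_subset_of_card_le hsub (by rw [hc, Finset.card_pair huw])).symm
      have : v ∈ ({u, w} : Finset α) := hveq ▸ hv
      rcases Finset.mem_insert.1 this with rfl | hx
      · exact hcon _ heG (Sym2.mem_mk_left _ _)
      · exact hcon _ heG ((Finset.mem_singleton.1 hx) ▸ Sym2.mem_mk_right _ _)
  · -- at least 3 vertices: erase v
    set H : CGraph α := ⟨G.verts.erase v, G.edges, G.not_diag, fun e he w hw =>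
      Finset.mem_erase.2 ⟨fun hwv => hcon e he (hwv ▸ hw), G.endpoints_mem e he w hw⟩⟩ with hH
    have hcard : H.verts.card = G.verts.card - 1 := by
      show (G.verts.erase v).card = _
      rw [Finset.card_erase_of_mem hv]
    have := hG.1 H ⟨Finset.erase_subset _ _, Finset.Subset.refl _⟩ (by omega)
    have hHe : H.edges = G.edges := rfl
    rw [hHe] at this
    have := hG.2
    omega

def edgeGraph (u v : α) (h : u ≠ v) : CGraph α where
  verts := {u, v}
  edges := {s(u, v)}
  not_diag := by
    intro e he
    rw [Finset.mem_singleton] at he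
    subst he
    exact fun hd => h (Sym2.mk_isDiag_iff.1 hd)
  endpoints_mem := by
    intro e he w hw
    rw [Finset.mem_singleton] at he
    subst he
    rcases Sym2.mem_iff.1 hw with rfl | rfl
    · exact Finset.mem_insert_self _ _
    · exact Finset.mem_insert_of_mem (Finset.mem_singleton_self _)

lemma edgeGraph_isostatic {u v : α} (h : u ≠ v) : (edgeGraph u v h).Isostatic := by
  constructor
  · intro H hsub h2
    have hv : H.verts.card ≤ 2 := by
      calc H.verts.card ≤ ({u, v} : Finset α).card := Finset.card_le_card hsub.1
        _ = 2 := Finset.card_pair h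
    have he : H.edges.card ≤ 1 := by
      calc H.edges.card ≤ ({s(u, v)} : Finset (Sym2 α)).card := Finset.card_le_card hsub.2
        _ = 1 := Finset.card_singleton _
    omega
  · show ({s(u, v)} : Finset (Sym2 α)).card + 3 = 2 * ({u, v} : Finset α).card
    rw [Finset.card_singleton, Finset.card_pair h]

lemma union_isostatic {C A B : CGraph α} (hC : C.Isostatic) (hA : A.IsSubgraph C)
    (hB : B.IsSubgraph C) (hAi : A.Isostatic) (hBi : B.Isostatic)
    (h2 : 2 ≤ (A.inter B).verts.card) : (A.union B).Isostatic := by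
  have hsub : (A.union B).IsSubgraph C :=
    ⟨Finset.union_subset hA.1 hB.1, Finset.union_subset hA.2 hB.2⟩
  have hisub : (A.inter B).IsSubgraph C :=
    ⟨Finset.inter_subset_left.trans hA.1, Finset.inter_subset_left.trans hA.2⟩
  have hI := hC.1 _ hisub h2
  have h2u : 2 ≤ (A.union B).verts.card := by
    have : (A.inter B).verts.card ≤ (A.union B).verts.card := by
      apply Finset.card_le_card
      simp only [inter_verts, union_verts]
      exact Finset.inter_subset_left.trans Finset.subset_union_left
    omega
  have hU := hC.1 _ hsub h2u
  have e1 : (A.edges ∪ B.edges).card + (A.edges ∩ B.edges).card = A.edges.card + B.edges.card :=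
    Finset.card_union_add_card_inter _ _
  have e2 : (A.verts ∪ B.verts).card + (A.verts ∩ B.verts).card = A.verts.card + B.verts.card :=
    Finset.card_union_add_card_inter _ _
  have hAe := hAi.2
  have hBe := hBi.2
  simp only [union_verts, union_edges] at hU h2u
  simp only [inter_verts, inter_edges] at hI h2
  refine ⟨hC.1.subgraph hsub, ?_⟩
  show (A.edges ∪ B.edges).card + 3 = 2 * (A.verts ∪ B.verts).card
  omega

end CGraph
namespace CGraph

variable {α : Type} [DecidableEq α]

lemma exists_cluster_mem {C : CGraph α} (hC : C.Isostatic) (h3 : 3 ≤ C.verts.card)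
    {e : Sym2 α} (he : e ∈ C.edges) : ∃ D, IsCluster D C ∧ e ∈ D.edges := by
  classical
  set S : Set (CGraph α) := {D | D.IsSubgraph C ∧ D ≠ C ∧ D.Isostatic ∧ e ∈ D.edges} with hS
  have hSne : S.Nonempty := by
    induction e using Sym2.ind with
    | _ u v =>
      have huv : u ≠ v := fun h => C.not_diag _ he (Sym2.mk_isDiag_iff.2 h)
      refine ⟨edgeGraph u v huv, ⟨?_, ?_, edgeGraph_isostatic huv, Finset.mem_singleton_self _⟩⟩
      · constructor
        · intro x hx
          rcases Finset.mem_insert.1 hx with rfl | hx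
          · exact C.endpoints_mem _ he _ (Sym2.mem_mk_left _ _)
          · exact C.endpoints_mem _ he _ ((Finset.mem_singleton.1 hx) ▸ Sym2.mem_mk_right _ _)
        · intro x hx
          have hx' : x = s(u, v) := Finset.mem_singleton.1 hx
          exact hx' ▸ he
      · intro hEq
        have : (edgeGraph u v huv).verts.card = C.verts.card := by rw [hEq]
        have : ({u, v} : Finset α).card = C.verts.card := this
        rw [Finset.card_pair huv] at this
        omega
  set T : Set ℕ := (fun D : CGraph α => D.verts.card) '' S with hT
  have hTne : T.Nonempty := hSne.image _
  have hTbdd : BddAbove T := by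
    refine ⟨C.verts.card, fun n hn => ?_⟩
    obtain ⟨D, hD, rfl⟩ := hn
    exact Finset.card_le_card hD.1.1
  obtain ⟨D, hD, hDcard⟩ := Nat.sSup_mem hTne hTbdd
  refine ⟨D, ⟨hD.1, hD.2.1, hD.2.2.1, ?_⟩, hD.2.2.2⟩
  intro D' hsub' hne' hiso' hss
  have hDsub : D.verts ⊆ D'.verts := hss.subset
  have hint : (D.inter D').verts = D.verts := by
    simp only [inter_verts]
    exact Finset.inter_eq_left.2 hDsub
  have hUiso : (D.union D').Isostatic := by
    refine union_isostatic hC hD.1 hsub' hD.2.2.1 hiso' ?_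
    rw [hint]; exact hD.2.2.1.two_le_verts
  have hUverts : (D.union D').verts = D'.verts := by
    simp only [union_verts]
    exact Finset.union_eq_right.2 hDsub
  have hUne : D.union D' ≠ C := by
    intro hEq
    have hss2 := verts_ssubset hsub' hne' hiso' hC
    rw [← hEq, hUverts] at hss2
    exact hss2.ne rfl
  have hUS : D.union D' ∈ S :=
    ⟨⟨Finset.union_subset hD.1.1 hsub'.1, Finset.union_subset hD.1.2 hsub'.2⟩, hUne, hUiso,
      Finset.mem_union_left _ hD.2.2.2⟩
  have hle : (D.union D').verts.card ≤ sSup T := le_csSup hTbdd ⟨_, hUS, rfl⟩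
  have hDcard' : D.verts.card = sSup T := hDcard
  rw [hUverts, ← hDcard'] at hle
  exact absurd hle (not_le.2 (Finset.card_lt_card hss))

lemma cluster_union_eq {C D₁ D₂ : CGraph α} (hC : C.Isostatic) (h1 : IsCluster D₁ C)
    (h2 : IsCluster D₂ C) (hne : D₁ ≠ D₂) (hnt : 2 ≤ (D₁.inter D₂).verts.card) :
    D₁.union D₂ = C := by
  have hUiso : (D₁.union D₂).Isostatic := union_isostatic hC h1.1 h2.1 h1.2.2.1 h2.2.2.1 hnt
  by_contra hU
  have hUsub : (D₁.union D₂).IsSubgraph C :=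
    ⟨Finset.union_subset h1.1.1 h2.1.1, Finset.union_subset h1.1.2 h2.1.2⟩
  have hm1 := h1.2.2.2 _ hUsub hU hUiso
  have hveq1 : D₁.verts = (D₁.union D₂).verts := by
    by_contra hne2
    exact hm1 (Finset.ssubset_iff_subset_ne.2 ⟨by simp only [union_verts]; exact Finset.subset_union_left, hne2⟩)
  have hbelow : D₂.verts ⊆ D₁.verts := by
    intro x hx
    rw [hveq1]
    simp only [union_verts]
    exact Finset.mem_union_right _ hx
  have hm2 := h2.2.2.2 _ h1.1 h1.2.1 h1.2.2.1
  have hveq2 : D₂.verts = D₁.verts := by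
    by_contra hne2
    exact hm2 (Finset.ssubset_iff_subset_ne.2 ⟨hbelow, hne2⟩)
  -- edge counting
  have hcv : (D₁.verts ∪ D₂.verts) = D₁.verts := Finset.union_eq_left.2 hbelow
  have hcE1 : (D₁.edges ∪ D₂.edges).card = D₁.edges.card := by
    have hu := hUiso.2
    simp only [union_verts, union_edges, hcv] at hu
    have := h1.2.2.1.2
    omega
  have hE1eq : D₁.edges ∪ D₂.edges = D₁.edges :=
    (Finset.eq_of_subset_of_card_le Finset.subset_union_left hcE1.le).symm
  have hE2sub : D₂.edges ⊆ D₁.edges := hE1eq ▸ Finset.subset_union_right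
  have hcard12 : D₁.edges.card ≤ D₂.edges.card := by
    have e1 := h1.2.2.1.2
    have e2 := h2.2.2.1.2
    rw [hveq2] at e2
    omega
  exact hne (ext' hveq2.symm (Finset.eq_of_subset_of_card_le hE2sub hcard12).symm)

lemma exists_two_clusters {C : CGraph α} (hC : C.Isostatic) (h3 : 3 ≤ C.verts.card) :
    ∃ D₁ D₂ : CGraph α, IsCluster D₁ C ∧ IsCluster D₂ C ∧ D₁ ≠ D₂ := by
  have hEne : C.edges.Nonempty := Finset.card_pos.1 (by have := hC.one_le_edges; omega)
  obtain ⟨e, he⟩ := hEne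
  obtain ⟨D₁, hD₁, heD₁⟩ := exists_cluster_mem hC h3 he
  by_contra hcon
  push_neg at hcon
  have hall : ∀ D : CGraph α, IsCluster D C → D = D₁ := fun D hD => by
    by_contra hne
    exact hne (hcon D D₁ hD hD₁)
  have hedges : C.edges ⊆ D₁.edges := by
    intro e' he'
    obtain ⟨D, hD, heD⟩ := exists_cluster_mem hC h3 he'
    exact (hall D hD) ▸ heD
  have hverts : C.verts ⊆ D₁.verts := by
    intro v hv
    obtain ⟨e', he', hve⟩ := exists_edge_of_mem_verts hC hv
    exact D₁.endpoints_mem e' (hedges he') v hve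
  exact hD₁.2.1 (ext' (Finset.Subset.antisymm hD₁.1.1 hverts) (Finset.Subset.antisymm hD₁.1.2 hedges))

lemma clusters_finite (C : CGraph α) : {D : CGraph α | IsCluster D C}.Finite := by
  have hsub : {D : CGraph α | IsCluster D C} ⊆
      (fun D : CGraph α => (D.verts, D.edges)) ⁻¹' ↑(C.verts.powerset ×ˢ C.edges.powerset) := by
    intro D hD
    simp only [Set.mem_preimage, Finset.coe_product, Set.mem_prod, Finset.mem_coe,
      Finset.mem_powerset]
    exact ⟨hD.1.1, hD.1.2⟩
  refine Set.Finite.subset (Set.Finite.preimage ?_ (Finset.finite_toSet _)) hsub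
  intro a _ b _ hab
  exact ext' (congrArg Prod.fst hab) (congrArg Prod.snd hab)

lemma mem_listUnion_verts {l : List (CGraph α)} {v : α} :
    v ∈ (listUnion l).verts ↔ ∃ g ∈ l, v ∈ g.verts := by
  induction l with
  | nil => simp [listUnion]
  | cons g gs ih => simp [listUnion, Finset.mem_union, ih]

lemma mem_listUnion_edges {l : List (CGraph α)} {e : Sym2 α} :
    e ∈ (listUnion l).edges ↔ ∃ g ∈ l, e ∈ g.edges := by
  induction l with
  | nil => simp [listUnion]
  | cons g gs ih => simp [listUnion, Finset.mem_union, ih]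

lemma listUnion_eq_of {C : CGraph α} {l : List (CGraph α)} (hsub : ∀ g ∈ l, g.IsSubgraph C)
    (hv : ∀ v ∈ C.verts, ∃ g ∈ l, v ∈ g.verts) (he : ∀ e ∈ C.edges, ∃ g ∈ l, e ∈ g.edges) :
    listUnion l = C := by
  refine ext' ?_ ?_
  · ext v
    rw [mem_listUnion_verts]
    exact ⟨fun ⟨g, hg, hvg⟩ => (hsub g hg).1 hvg, hv v⟩
  · ext e
    rw [mem_listUnion_edges]
    exact ⟨fun ⟨g, hg, heg⟩ => (hsub g hg).2 heg, he e⟩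

lemma isSingleEdge_of_card_two {G : CGraph α} (hG : G.Isostatic) (hc : G.verts.card = 2) :
    G.IsSingleEdge := by
  have hE : G.edges.card = 1 := by have := hG.2; omega
  obtain ⟨e, he⟩ := Finset.card_eq_one.1 hE
  have heG : e ∈ G.edges := he ▸ Finset.mem_singleton_self e
  induction e using Sym2.ind with
  | _ u w =>
    have huw : u ≠ w := fun h => G.not_diag _ heG (Sym2.mk_isDiag_iff.2 h)
    refine ⟨u, w, huw, ?_, he⟩
    have hsub : ({u, w} : Finset α) ⊆ G.verts := by
      intro x hx
      rcases Finset.mem_insert.1 hx with rfl | hx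
      · exact G.endpoints_mem _ heG _ (Sym2.mem_mk_left _ _)
      · exact G.endpoints_mem _ heG _ ((Finset.mem_singleton.1 hx) ▸ Sym2.mem_mk_right _ _)
    exact (Finset.eq_of_subset_of_card_le hsub (by rw [hc, Finset.card_pair huw])).symm

end CGraph

instance {α : Type} [DecidableEq α] : Inhabited (DRTree α) := ⟨.node CGraph.empty []⟩

/-- every isostatic graph with at least one edge has a canonical DR-plan. -/

theorem canonical_drplan_exists
    {α : Type} [DecidableEq α] (G : CGraph α)
    (hG : G.Isostatic) (hE : G.edges.Nonempty) :
    ∃ t : DRTree α, IsDRPlanOf t G ∧ IsCanonical t := by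
  classical
  clear hE
  suffices H : ∀ (n : ℕ) (G : CGraph α), G.verts.card ≤ n → G.Isostatic →
      ∃ t : DRTree α, IsDRPlanOf t G ∧ IsCanonical t from H G.verts.card G le_rfl hG
  intro n
  induction n with
  | zero =>
    intro G hcard hG
    have := hG.two_le_verts
    omega
  | succ n ih =>
    intro G hcard hG
    rcases Nat.lt_or_ge G.verts.card 3 with h2 | h3
    · have hc2 : G.verts.card = 2 := by have := hG.two_le_verts; omega
      exact ⟨.node G [], ⟨IsDRPlan.leaf G hG (CGraph.isSingleEdge_of_card_two hG hc2), rfl⟩,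
        IsCanonical.leaf G⟩
    · have hplan : ∀ D : CGraph α, D.IsCluster G →
          ∃ t : DRTree α, IsDRPlanOf t D ∧ IsCanonical t := by
        intro D hD
        have hlt := Finset.card_lt_card (CGraph.verts_ssubset hD.1 hD.2.1 hD.2.2.1 hG)
        exact ih D (by omega) hD.2.2.1
      choose! f hf using hplan
      have hlab : ∀ D : CGraph α, D.IsCluster G → (f D).label = D := fun D hD => (hf D hD).1.2
      by_cases hpt : G.PairwiseTrivialClusters
      · -- all clusters as children
        set l := (CGraph.clusters_finite G).toFinset.toList with hl
        have hlmem : ∀ D : CGraph α, D ∈ l ↔ D.IsCluster G := fun D => by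
          rw [hl, Finset.mem_toList, Set.Finite.mem_toFinset]; rfl
        set ts := l.map f with hts
        have hmaplab : ts.map DRTree.label = l := by
          rw [hts, List.map_map]
          calc l.map (DRTree.label ∘ f) = l.map id :=
                List.map_congr_left (fun D hD => hlab D ((hlmem D).1 hD))
            _ = l := List.map_id l
        obtain ⟨D₁, D₂, hc1, hc2, hne12⟩ := CGraph.exists_two_clusters hG h3
        have hlen : 2 ≤ ts.length := by
          rw [hts, List.length_map, hl, Finset.length_toList]
          refine Finset.one_lt_card.2 ⟨D₁, ?_, D₂, ?_, hne12⟩ <;>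
            rw [Set.Finite.mem_toFinset] <;> assumption
        have hcover : CGraph.listUnion (ts.map DRTree.label) = G := by
          rw [hmaplab]
          refine CGraph.listUnion_eq_of (fun g hg => ((hlmem g).1 hg).1) ?_ ?_
          · intro v hv
            obtain ⟨e, he, hve⟩ := CGraph.exists_edge_of_mem_verts hG hv
            obtain ⟨D, hD, heD⟩ := CGraph.exists_cluster_mem hG h3 he
            exact ⟨D, (hlmem D).2 hD, D.endpoints_mem e heD v hve⟩
          · intro e he
            obtain ⟨D, hD, heD⟩ := CGraph.exists_cluster_mem hG h3 he
            exact ⟨D, (hlmem D).2 hD, heD⟩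
        have htmem : ∀ t ∈ ts, ∃ D : CGraph α, D.IsCluster G ∧ t = f D ∧ t.label = D := by
          intro t ht
          rw [hts, List.mem_map] at ht
          obtain ⟨D, hD, rfl⟩ := ht
          have hcl := (hlmem D).1 hD
          exact ⟨D, hcl, rfl, hlab D hcl⟩
        refine ⟨.node G ts, ⟨IsDRPlan.node G ts hG hlen ?_ hcover ?_, rfl⟩, ?_⟩
        · intro t ht
          obtain ⟨D, hD, rfl, hlabD⟩ := htmem t ht
          rw [hlabD]
          exact ⟨hD.1, hD.2.1, hD.2.2.1⟩
        · intro t ht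
          obtain ⟨D, hD, rfl, _⟩ := htmem t ht
          exact (hf D hD).1.1
        · refine IsCanonical.node G ts (List.length_pos_iff.1 (by omega)) ?_ ?_ ?_ ?_
          · intro t ht
            obtain ⟨D, hD, rfl, hlabD⟩ := htmem t ht
            rw [hlabD]; exact hD
          · intro _ D
            constructor
            · intro hD
              refine ⟨f D, ?_, hlab D hD⟩
              rw [hts, List.mem_map]
              exact ⟨D, (hlmem D).2 hD, rfl⟩
            · rintro ⟨t, ht, rfl⟩
              obtain ⟨D, hD, rfl, hlabD⟩ := htmem t ht
              rw [hlabD]; exact hD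
          · intro h; exact absurd hpt h
          · intro t ht
            obtain ⟨D, hD, rfl, _⟩ := htmem t ht
            exact (hf D hD).2
      · -- two overlapping clusters
        have hpt' := hpt
        unfold CGraph.PairwiseTrivialClusters at hpt'
        push_neg at hpt'
        obtain ⟨D₁, D₂, h1, h2, hne, hnt⟩ := hpt'
        have h2le : 2 ≤ (D₁.inter D₂).verts.card := by
          unfold CGraph.Trivial at hnt; omega
        have hUeq := CGraph.cluster_union_eq hG h1 h2 hne h2le
        have hl1 := hlab D₁ h1
        have hl2 := hlab D₂ h2
        refine ⟨.node G [f D₁, f D₂], ⟨IsDRPlan.node G _ hG (by simp) ?_ ?_ ?_, rfl⟩, ?_⟩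
        · intro t ht
          rcases List.mem_pair.1 ht with rfl | rfl
          · rw [hl1]; exact ⟨h1.1, h1.2.1, h1.2.2.1⟩
          · rw [hl2]; exact ⟨h2.1, h2.2.1, h2.2.2.1⟩
        · show CGraph.listUnion [(f D₁).label, (f D₂).label] = G
          rw [hl1, hl2]
          show D₁.union (D₂.union CGraph.empty) = G
          rw [CGraph.union_empty, hUeq]
        · intro t ht
          rcases List.mem_pair.1 ht with rfl | rfl
          · exact (hf D₁ h1).1.1
          · exact (hf D₂ h2).1.1
        · refine IsCanonical.node G _ (by simp) ?_ ?_ ?_ ?_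
          · intro t ht
            rcases List.mem_pair.1 ht with rfl | rfl
            · rw [hl1]; exact h1
            · rw [hl2]; exact h2
          · intro hp; exact absurd hp hpt
          · intro _
            refine ⟨f D₁, f D₂, rfl, ?_, ?_⟩
            · rw [hl1, hl2]; exact hne
            · rw [hl1, hl2]; exact hnt
          · intro t ht
            rcases List.mem_pair.1 ht with rfl | rfl
            · exact (hf D₁ h1).2
            · exact (hf D₂ h2).2
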